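/- For the corecursive race function fstconv (where fstconv (return b) y = return b, fstconv (step x) (return b) = return b, fstconv (step x) (step y) = step (fstconv x y)): fstconv step^∞ y ≈ y; if fstconv x y ⇓ b then x ⇓ b or y ⇓ b; and if x ⊑ y and x ⇓ b then fstconv x y ⇓ b. -/

import Mathlib

inductive Converges {A : Type*} : Computation A → A → Prop
  | ret (a : A) : Converges (Computation.pure a) a
  | step {x : Computation A} {a : A} : Converges x a → Converges x.think a

def Diverge {A : Type*} (x : Computation A) : Prop :=
  ∃ P : Computation A → Prop, P x ∧ ∀ y, P y → ∃ y', y = Computation.think y' ∧ P y'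

def WBisim {A : Type*} (x y : Computation A) : Prop :=
  ∃ R : Computation A → Computation A → Prop, R x y ∧ ∀ u v, R u v →
    (∃ a, Converges u a ∧ Converges v a) ∨
    (∃ u' v', u = Computation.think u' ∧ v = Computation.think v' ∧ R u' v')

def ConvOrder {A : Type*} (x y : Computation A) : Prop :=
  ∃ R : Computation A → Computation A → Prop, R x y ∧ ∀ u v, R u v →
    (∃ a, Converges u a ∧ Converges v a) ∨
    (∃ u' v', u = Computation.think u' ∧ v = Computation.think v' ∧ R u' v') ∨
    (∃ u', u = Computation.think u' ∧ R u' v)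

def stepInf (A : Type*) : Computation A := Computation.empty A

inductive DFinite {A : Type*} : Computation A → Prop
  | ret (a : A) : DFinite (Computation.pure a)
  | step {x : Computation A} : DFinite x → DFinite x.think

def Finitary {A B : Type*} (F : (A → Computation B) → (A → Computation B)) : Prop :=
  ∀ f a b, Converges (F f a) b →
    ∃ l : List (A × B), (∀ p ∈ l, Converges (f p.1) p.2) ∧
      ∀ g : A → Computation B, (∀ p ∈ l, Converges (g p.1) p.2) → Converges (F g a) b

private lemma pure_ne_think' {A : Type*} (a : A) (s : Computation A) :
    Computation.pure a ≠ Computation.think s := by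
  intro h
  have := congrArg Computation.destruct h
  simp at this

private lemma think_inj' {A : Type*} {s t : Computation A}
    (h : Computation.think s = Computation.think t) : s = t := by
  have := congrArg Computation.destruct h
  simpa using this

private lemma pure_inj' {A : Type*} {a b : A}
    (h : Computation.pure a = Computation.pure b) : a = b := by
  have := congrArg Computation.destruct h
  simpa using this

private lemma conv_pure {A : Type*} {a b : A} (h : Converges (Computation.pure a) b) : a = b := by
  generalize he : Computation.pure a = z at h
  induction h with
  | ret c => exact pure_inj' he
  | step _ _ => exact absurd he (pure_ne_think' _ _)

private lemma conv_think {A : Type*} {x : Computation A} {b : A}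
    (h : Converges (Computation.think x) b) : Converges x b := by
  generalize he : Computation.think x = z at h
  cases h with
  | ret a => exact absurd he.symm (pure_ne_think' _ _)
  | step h' => rwa [think_inj' he]

private lemma conv_det {A : Type*} {x : Computation A} {a b : A}
    (ha : Converges x a) (hb : Converges x b) : a = b := by
  induction ha with
  | ret => exact conv_pure hb
  | step _ ih => exact ih (conv_think hb)

private lemma order_conv {A : Type*} {x y : Computation A} {b : A}
    (h : ConvOrder x y) (hc : Converges x b) : Converges y b := by
  obtain ⟨R, hR, hstep⟩ := h
  induction hc generalizing y with
  | ret a =>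
    rcases hstep _ _ hR with ⟨c, hc1, hc2⟩ | ⟨u', v', hu, _, _⟩ | ⟨u', hu, _⟩
    · rwa [← conv_pure hc1] at hc2
    · exact absurd hu (pure_ne_think' _ _)
    · exact absurd hu (pure_ne_think' _ _)
  | @step x' a hx ih =>
    rcases hstep _ _ hR with ⟨c, hc1, hc2⟩ | ⟨u', v', hu, hv, hR'⟩ | ⟨u', hu, hR'⟩
    · rwa [conv_det hc1 hx.step] at hc2
    · rw [← think_inj' hu] at hR'
      exact hv ▸ (ih hR').step
    · rw [← think_inj' hu] at hR'
      exact ih hR'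

theorem stmt17 {B : Type*} (fstconv : Computation B → Computation B → Computation B)
    (h1 : ∀ (b : B) (y : Computation B), fstconv (Computation.pure b) y = Computation.pure b)
    (h2 : ∀ (x : Computation B) (b : B), fstconv x.think (Computation.pure b) = Computation.pure b)
    (h3 : ∀ x y : Computation B, fstconv x.think y.think = (fstconv x y).think) :
    (∀ y : Computation B, WBisim (fstconv (stepInf B) y) y) ∧
    (∀ (x y : Computation B) (b : B), Converges (fstconv x y) b → Converges x b ∨ Converges y b) ∧
    (∀ (x y : Computation B) (b : B), ConvOrder x y → Converges x b → Converges (fstconv x y) b) := by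
  have hinf : stepInf B = Computation.think (stepInf B) := Computation.think_empty
  refine ⟨?_, ?_, ?_⟩
  · intro y
    refine ⟨fun u v => u = fstconv (stepInf B) v, rfl, ?_⟩
    intro u v huv
    induction v using Computation.recOn with
    | pure b =>
      left
      refine ⟨b, ?_, Converges.ret b⟩
      rw [huv, hinf, h2]
      exact Converges.ret b
    | think v' =>
      right
      refine ⟨fstconv (stepInf B) v', v', ?_, rfl, rfl⟩
      rw [huv, hinf, h3, ← hinf]
  · intro x y b h
    generalize he : fstconv x y = z at h
    induction h generalizing x y with
    | ret a =>
      induction x using Computation.recOn with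
      | pure c =>
        rw [h1] at he
        rw [pure_inj' he]
        exact Or.inl (Converges.ret _)
      | think x' =>
        induction y using Computation.recOn with
        | pure c =>
          rw [h2] at he
          rw [pure_inj' he]
          exact Or.inr (Converges.ret _)
        | think y' =>
          rw [h3] at he
          exact absurd he.symm (pure_ne_think' _ _)
    | @step z' a hz ih =>
      induction x using Computation.recOn with
      | pure c =>
        rw [h1] at he
        exact absurd he (pure_ne_think' _ _)
      | think x' =>
        induction y using Computation.recOn with
        | pure c =>
          rw [h2] at he
          exact absurd he (pure_ne_think' _ _)
        | think y' =>
          rw [h3] at he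
          rcases ih x' y' (think_inj' he) with h | h
          · exact Or.inl h.step
          · exact Or.inr h.step
  · intro x y b ho hx
    have hy : Converges y b := order_conv ho hx
    clear ho
    induction hx generalizing y with
    | ret a =>
      rw [h1]
      exact Converges.ret a
    | @step x' a hx' ih =>
      induction y using Computation.recOn with
      | pure c =>
        rw [h2, conv_pure hy]
        exact Converges.ret a
      | think y' =>
        rw [h3]
        exact (ih _ (conv_think hy)).step
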